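/- arXiv:2501.10840 — 3 statements merged into one kernel-verified Lean document; each statement's English description precedes it below -/
import Mathlib

section
/- For all c, k ∈ ℕ, every graph that is c-quasi-isometric to a graph with treewidth at most k has a (k+1, 3c²)-centred tree-decomposition. -/
open SimpleGraph
open scoped ENNReal NNReal

/-- `φ` is a `q`-quasi-isometry from `G` to `H`:
`q⁻¹ · dist_G(u,v) − q ≤ dist_H(φ u, φ v) ≤ q · dist_G(u,v) + q` (distances taken in `ℝ≥0∞`,
where unreachable pairs have distance `∞`), and every vertex of `H` is within distance `q`
of the image of `φ`. -/
def IsQuasiIsometry {V W : Type} (q : ℕ) (G : SimpleGraph V) (H : SimpleGraph W)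
    (φ : V → W) : Prop :=
  (∀ u v : V, (G.edist u v : ℝ≥0∞) / q - q ≤ (H.edist (φ u) (φ v) : ℝ≥0∞)) ∧
  (∀ u v : V, (H.edist (φ u) (φ v) : ℝ≥0∞) ≤ q * (G.edist u v : ℝ≥0∞) + q) ∧
  (∀ x : W, ∃ v : V, (H.edist x (φ v) : ℝ≥0∞) ≤ q)

/-- `G` is `q`-quasi-isometric to `H`. -/
def QuasiIsometric {V W : Type} (q : ℕ) (G : SimpleGraph V) (H : SimpleGraph W) : Prop :=
  ∃ φ : V → W, IsQuasiIsometry q G H φ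

/-- `(T, β)` is a `T`-decomposition of `G`: every edge of `G` has both ends in some bag, and
for every vertex `v` of `G` the set of nodes whose bag contains `v` induces a non-empty
connected subgraph of `T`. -/
def IsTreeDecomp {X V : Type} (T : SimpleGraph X) (G : SimpleGraph V) (β : X → Set V) : Prop :=
  (∀ ⦃u v : V⦄, G.Adj u v → ∃ x : X, u ∈ β x ∧ v ∈ β x) ∧
  (∀ v : V, (T.induce {x : X | v ∈ β x}).Connected)

/-- `(L, β)` is an `L`-decomposition of `G` over the line (linearly ordered set) `L`:
every edge of `G` has both ends in some bag, and for every vertex `v` of `G` the set of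
points of `L` whose bag contains `v` is a non-empty interval of `L`. -/
def IsLineDecomp {L V : Type} [LinearOrder L] (G : SimpleGraph V) (β : L → Set V) : Prop :=
  (∀ ⦃u v : V⦄, G.Adj u v → ∃ x : L, u ∈ β x ∧ v ∈ β x) ∧
  (∀ v : V, {x : L | v ∈ β x}.Nonempty ∧ {x : L | v ∈ β x}.OrdConnected)

/-- `S` is `(k,d)`-centred in `G`: `S` can be partitioned into at most `k` sets, each of
weak diameter at most `d` in `G`. -/
def Centred {V : Type} (G : SimpleGraph V) (k d : ℕ) (S : Set V) : Prop :=
  ∃ P : Fin k → Set V,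
    (⋃ i, P i) = S ∧
    (∀ i j : Fin k, i ≠ j → Disjoint (P i) (P j)) ∧
    (∀ i : Fin k, ∀ u ∈ P i, ∀ v ∈ P i, G.edist u v ≤ (d : ℕ∞))

/-- The independence number of the subgraph of `G` induced by `S` is at most `k`. -/
def IndepAtMost {V : Type} (G : SimpleGraph V) (S : Set V) (k : ℕ) : Prop :=
  ∀ I ⊆ S, (∀ u ∈ I, ∀ v ∈ I, u ≠ v → ¬ G.Adj u v) → I.encard ≤ (k : ℕ∞)

/-- The domination number of the subgraph of `G` induced by `S` is at most `k`. -/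
def DomAtMost {V : Type} (G : SimpleGraph V) (S : Set V) (k : ℕ) : Prop :=
  ∃ D ⊆ S, D.encard ≤ (k : ℕ∞) ∧ ∀ v ∈ S, v ∉ D → ∃ u ∈ D, G.Adj v u

/-- `P` is a partition of the graph `G`: a collection of non-empty vertex sets, each inducing
a connected subgraph of `G`, such that every vertex lies in exactly one part. -/
def IsGraphPartition {V : Type} (G : SimpleGraph V) (P : Set (Set V)) : Prop :=
  (∀ A ∈ P, A.Nonempty) ∧
  (∀ A ∈ P, (G.induce A).Connected) ∧
  (∀ v : V, ∃! A, A ∈ P ∧ v ∈ A)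

/-- The quotient graph `G/P`: vertices are the parts of `P`, and distinct parts are adjacent
iff some vertex of one is adjacent in `G` to some vertex of the other. -/
def quotientGraph {V : Type} (G : SimpleGraph V) (P : Set (Set V)) : SimpleGraph P where
  Adj A B := A ≠ B ∧ ∃ a ∈ (A : Set V), ∃ b ∈ (B : Set V), G.Adj a b
  symm := by
    constructor
    rintro A B ⟨hne, a, ha, b, hb, hab⟩
    exact ⟨hne.symm, b, hb, a, ha, hab.symm⟩
  loopless := by constructor; rintro A ⟨hne, -⟩; exact hne rfl

/-- `sim_G(A) ≤ k`: every induced matching of `G` between `A` and its complement has at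
most `k` edges. -/
def SimAtMost {V : Type} (G : SimpleGraph V) (A : Set V) (k : ℕ) : Prop :=
  ∀ (m : ℕ) (a b : Fin m → V),
    Function.Injective a → Function.Injective b →
    (∀ i, a i ∈ A) → (∀ i, b i ∉ A) →
    (∀ i, G.Adj (a i) (b i)) →
    (∀ i j : Fin m, i ≠ j →
      ¬ G.Adj (a i) (a j) ∧ ¬ G.Adj (b i) (b j) ∧ ¬ G.Adj (a i) (b j)) →
    m ≤ k

/-- `G` has sim-width at most `k`: there is a branch-decomposition `(T, L)` — a subcubic
tree `T` together with a map `L` from the vertices of `G` to the leaves of `T` — such that,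
for every edge `ab` of `T`, the side of the associated vertex partition consisting of the
vertices mapped to the component of `T − ab` containing `a` satisfies `sim_G ≤ k`. -/
def SimWidthAtMost {V : Type} (G : SimpleGraph V) (k : ℕ) : Prop :=
  ∃ (X : Type) (T : SimpleGraph X) (L : V → X),
    T.IsTree ∧
    (∀ x : X, (T.neighborSet x).encard ≤ 3) ∧
    (∀ v : V, (T.neighborSet (L v)).encard = 1) ∧
    (∀ a b : X, T.Adj a b →
      SimAtMost G {v : V | (T.deleteEdges {s(a, b)}).Reachable (L v) a} k)

/-!
Pull a tree-decomposition `(T, β)` of `H` back along the quasi-isometry `φ`: the new bag at `x`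
consists of the vertices `v` with `φ v` within distance `c` of `β x`. The ends of an edge of `G`
are mapped at most `2c` apart, so a midpoint of a shortest path between their images lies in a
bag that yields a new bag containing both; the nodes whose new bag contains `v` form the union
of the subtrees of the vertices of the `c`-ball around `φ v`, connected because the ball is.
A new bag is covered by the `c`-balls around the at most `k + 1` vertices of the old one, and
two vertices with images in a common ball are at distance at most `2c` in `H`, hence at most
`c · (2c + c) = 3c²` in `G`.
-/

namespace SimpleGraph

variable {V : Type*} {G : SimpleGraph V}

lemma exists_edist_le_and_edist_le {a b : V} {m n : ℕ} (h : G.edist a b ≤ m + n) :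
    ∃ w, G.edist a w ≤ m ∧ G.edist w b ≤ n := by
  obtain ⟨p, hp⟩ := exists_walk_of_edist_ne_top (h.trans_lt (ENat.natCast_lt_top (m + n))).ne
  have hlen : p.length ≤ m + n := by exact_mod_cast hp ▸ h
  refine ⟨p.getVert m, (p.take m).edist_le.trans ?_, (p.drop m).edist_le.trans ?_⟩
  · simp
  · simp only [Walk.drop_length, Nat.cast_le]
    omega

lemma edist_le_edist_of_mem_support {a b u : V} {p : G.Walk a b} (hp : p.length = G.edist a b)
    (hu : u ∈ p.support) : G.edist u b ≤ G.edist a b := by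
  classical
  exact hp ▸ (p.dropUntil u hu).edist_le.trans (by exact_mod_cast p.length_dropUntil_le_length hu)

end SimpleGraph

section TreeDecomp

variable {V W X : Type} {T : SimpleGraph X} {G : SimpleGraph V} {H : SimpleGraph W}
  {β : X → Set W}

lemma IsTreeDecomp.reachable_of_walk (hβ : IsTreeDecomp T H β) {S : Set X} {w w' : W}
    (p : H.Walk w w') (hpS : ∀ u ∈ p.support, {x | u ∈ β x} ⊆ S) {x x' : X}
    (hx : w ∈ β x) (hx' : w' ∈ β x') (hxS : x ∈ S) (hx'S : x' ∈ S) :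
    (T.induce S).Reachable ⟨x, hxS⟩ ⟨x', hx'S⟩ := by
  induction p generalizing x with
  | nil =>
    exact ((hβ.2 _).preconnected ⟨x, hx⟩ ⟨x', hx'⟩).map
      (T.induceHomOfLE (hpS _ (by simp))).toHom
  | @cons u v _ huv q ih =>
    obtain ⟨y, huy, hvy⟩ := hβ.1 huv
    have hyS : y ∈ S := hpS u (by simp) huy
    have hxy : (T.induce S).Reachable ⟨x, hxS⟩ ⟨y, hyS⟩ :=
      ((hβ.2 u).preconnected ⟨x, hx⟩ ⟨y, huy⟩).map (T.induceHomOfLE (hpS u (by simp))).toHom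
    exact hxy.trans (ih (fun z hz => hpS z (by simp [hz])) hvy hx' hyS)

lemma IsTreeDecomp.connected_induce_ball (hβ : IsTreeDecomp T H β) (w₀ : W) (r : ℕ) :
    (T.induce {x | ∃ w ∈ β x, H.edist w₀ w ≤ r}).Connected := by
  obtain ⟨⟨x₀, hx₀⟩⟩ := (hβ.2 w₀).nonempty
  have hx₀S : ∃ w ∈ β x₀, H.edist w₀ w ≤ r := ⟨w₀, hx₀, by simp⟩
  have reach : ∀ x (hxS : ∃ w ∈ β x, H.edist w₀ w ≤ r),
      (T.induce {x | ∃ w ∈ β x, H.edist w₀ w ≤ r}).Reachable ⟨x, hxS⟩ ⟨x₀, hx₀S⟩ := by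
    rintro x hxS
    obtain ⟨w, hw, hwr⟩ := id hxS
    rw [edist_comm] at hwr
    obtain ⟨p, hp⟩ := exists_walk_of_edist_ne_top (hwr.trans_lt (ENat.natCast_lt_top r)).ne
    refine hβ.reachable_of_walk p (fun u hu y hy => ?_) hw hx₀ hxS hx₀S
    exact ⟨u, hy, edist_comm (G := H) ▸ (edist_le_edist_of_mem_support hp hu).trans hwr⟩
  have : Nonempty {x | ∃ w ∈ β x, H.edist w₀ w ≤ r} := ⟨⟨x₀, hx₀S⟩⟩
  exact ⟨fun ⟨x, hx⟩ ⟨y, hy⟩ => (reach x hx).trans (reach y hy).symm⟩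

def comapBall (H : SimpleGraph W) (φ : V → W) (r : ℕ) (B : Set W) : Set V :=
  {v | ∃ w ∈ B, H.edist (φ v) w ≤ r}

lemma IsTreeDecomp.comapBall (hβ : IsTreeDecomp T H β) {φ : V → W} {r : ℕ}
    (hφ : ∀ ⦃u v⦄, G.Adj u v → H.edist (φ u) (φ v) ≤ 2 * r) :
    IsTreeDecomp T G (fun x => comapBall H φ r (β x)) := by
  refine ⟨fun u v huv => ?_, fun v => hβ.connected_induce_ball (φ v) r⟩
  obtain ⟨w, huw, hwv⟩ := exists_edist_le_and_edist_le (two_mul (r : ℕ∞) ▸ hφ huv)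
  obtain ⟨⟨x, hx⟩⟩ := (hβ.2 w).nonempty
  exact ⟨x, ⟨w, hx, huw⟩, ⟨w, hx, edist_comm (G := H) ▸ hwv⟩⟩

end TreeDecomp

lemma centred_of_subset_biUnion {V ι : Type} {G : SimpleGraph V} {S : Set V} {k d : ℕ}
    {B : Set ι} (hB : B.encard ≤ k) (C : ι → Set V) (hS : S ⊆ ⋃ b ∈ B, C b)
    (hC : ∀ b ∈ B, ∀ u ∈ C b, ∀ v ∈ C b, G.edist u v ≤ d) : Centred G k d S := by
  choose g hgB hgC using fun v (hv : v ∈ S) => Set.mem_iUnion₂.mp (hS hv)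
  obtain ⟨e⟩ : Nonempty (B ↪ Fin k) := by
    have := (Set.finite_of_encard_le_coe hB).fintype
    refine Function.Embedding.nonempty_of_card_le ?_
    rwa [Fintype.card_fin, ← ENat.natCast_le_natCast, Set.coe_fintypeCard]
  refine ⟨fun i => {v | ∃ hv : v ∈ S, e ⟨g v hv, hgB v hv⟩ = i}, ?_, ?_, ?_⟩
  · ext v
    simp only [Set.mem_iUnion, Set.mem_ofPred_eq]
    exact ⟨fun ⟨_, hv, _⟩ => hv, fun hv => ⟨_, hv, rfl⟩⟩
  · rintro i j hij
    refine Set.disjoint_left.mpr fun v ⟨hv, hvi⟩ ⟨_, hvj⟩ => hij ?_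
    rw [← hvi, ← hvj]
  · rintro i u ⟨hu, rfl⟩ v ⟨hv, hvu⟩
    have hg : g v hv = g u hu := congrArg Subtype.val (e.injective hvu)
    exact hC _ (hgB u hu) u (hgC u hu) v (hg ▸ hgC v hv)

namespace IsQuasiIsometry

variable {V W : Type} {G : SimpleGraph V} {H : SimpleGraph W} {φ : V → W} {q : ℕ}

lemma edist_le_two_mul_of_adj (hφ : IsQuasiIsometry q G H φ) {u v : V} (huv : G.Adj u v) :
    H.edist (φ u) (φ v) ≤ 2 * q := by
  have h := hφ.2.1 u v
  rw [edist_eq_one_iff_adj.mpr huv, ENat.toENNReal_one, mul_one, ← two_mul] at h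
  exact ENat.toENNReal_le.mp (by simpa using h)

lemma edist_le_of_edist_image_le (hφ : IsQuasiIsometry q G H φ) {u v : V} {m : ℕ}
    (h : H.edist (φ u) (φ v) ≤ m) : G.edist u v ≤ q * (m + q) := by
  have hlow : (G.edist u v : ℝ≥0∞) / q ≤ m + q :=
    tsub_le_iff_right.mp ((hφ.1 u v).trans (by exact_mod_cast h))
  rcases eq_or_ne q 0 with rfl | hq
  · by_contra hne
    have hne' : (G.edist u v : ℝ≥0∞) ≠ 0 := by simpa using hne
    simp [ENNReal.div_zero hne'] at hlow
  · rw [ENNReal.div_le_iff (by exact_mod_cast hq) (by simp), mul_comm] at hlow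
    exact ENat.toENNReal_le.mp (by simpa using hlow)

end IsQuasiIsometry

theorem centredTreeDecomp_of_quasiIsometric_boundedTreewidth_general
    (c k : ℕ) (V W : Type) (G : SimpleGraph V) (H : SimpleGraph W)
    (hH : ∃ (X : Type) (T : SimpleGraph X) (β : X → Set W),
      T.IsTree ∧ IsTreeDecomp T H β ∧ ∀ x : X, (β x).encard ≤ ((k + 1 : ℕ) : ℕ∞))
    (hQI : QuasiIsometric c G H) :
    ∃ (X : Type) (T : SimpleGraph X) (β : X → Set V),
      T.IsTree ∧ IsTreeDecomp T G β ∧ ∀ x : X, Centred G (k + 1) (3 * c ^ 2) (β x) := by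
  obtain ⟨φ, hφ⟩ := hQI
  obtain ⟨X, T, β, hT, hβ, hsize⟩ := hH
  refine ⟨X, T, fun x => comapBall H φ c (β x), hT,
    hβ.comapBall fun _ _ => hφ.edist_le_two_mul_of_adj, fun x => ?_⟩
  refine centred_of_subset_biUnion (hsize x) (fun w => {v | H.edist (φ v) w ≤ c})
    (fun v ⟨w, hw, hv⟩ => Set.mem_biUnion hw hv) fun w _ u hu v hv => ?_
  have hφuv : H.edist (φ u) (φ v) ≤ (2 * c : ℕ) := by
    calc H.edist (φ u) (φ v) ≤ H.edist (φ u) w + H.edist w (φ v) := SimpleGraph.edist_triangle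
      _ ≤ c + c := add_le_add hu (edist_comm (G := H) ▸ hv)
      _ = (2 * c : ℕ) := by push_cast; ring
  calc G.edist u v ≤ c * ((2 * c : ℕ) + c) := hφ.edist_le_of_edist_image_le hφuv
    _ = (3 * c ^ 2 : ℕ) := by push_cast; ring

/-- For all `c, k ∈ ℕ`, every graph that is `c`-quasi-isometric to a graph
with treewidth at most `k` has a `(k+1, 3c²)`-centred tree-decomposition. -/
theorem centredTreeDecomp_of_quasiIsometric_boundedTreewidth
    (c k : ℕ) (V W : Type) [Finite V] [Finite W] (G : SimpleGraph V) (H : SimpleGraph W)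
    (hH : ∃ (X : Type) (T : SimpleGraph X) (β : X → Set W),
      T.IsTree ∧ IsTreeDecomp T H β ∧ ∀ x : X, (β x).encard ≤ ((k + 1 : ℕ) : ℕ∞))
    (hQI : QuasiIsometric c G H) :
    ∃ (X : Type) (T : SimpleGraph X) (β : X → Set V),
      T.IsTree ∧ IsTreeDecomp T G β ∧ ∀ x : X, Centred G (k + 1) (3 * c ^ 2) (β x) :=
  centredTreeDecomp_of_quasiIsometric_boundedTreewidth_general c k V W G H hH hQI
end

section
/- For all c, k ∈ ℕ, every graph that is c-quasi-isometric to a graph with pathwidth at most k has a (k+1, 3c²)-centred path-decomposition. -/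
open SimpleGraph
open scoped ENNReal NNReal

/-- Intermediate value along a walk in an induced subgraph of a path graph. -/
lemma pg_walk_between {n : ℕ} {S : Set (Fin n)} :
    ∀ {x y : ↥S} (_ : ((SimpleGraph.pathGraph n).induce S).Walk x y) (j : Fin n),
      (x : Fin n) ≤ j → j ≤ (y : Fin n) → j ∈ S := by
  intro x y p
  induction p with
  | nil =>
    intro j h1 h2
    cases le_antisymm h2 h1
    exact Subtype.coe_prop _
  | @cons a b w hadj q ih =>
    intro j h1 h2
    have hab : ((a : Fin n) : Fin n).val + 1 = (b : Fin n).val ∨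
        ((b : Fin n)).val + 1 = ((a : Fin n)).val := by
      have : (SimpleGraph.pathGraph n).Adj (a : Fin n) (b : Fin n) := hadj
      exact (SimpleGraph.pathGraph_adj).mp this
    by_cases hb : (b : Fin n) ≤ j
    · exact ih j hb h2
    · have hlt : j.val < (b : Fin n).val := by
        rw [Fin.le_def] at hb; omega
      have h1' : (a : Fin n).val ≤ j.val := h1
      have : j = (a : Fin n) := Fin.ext (by omega)
      subst this; exact a.2

lemma ordConnected_of_connected_induce_pathGraph {n : ℕ} {S : Set (Fin n)}
    (h : ((SimpleGraph.pathGraph n).induce S).Connected) : S.OrdConnected := by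
  constructor
  intro i hi l hl j hj
  obtain ⟨p⟩ := h.preconnected ⟨i, hi⟩ ⟨l, hl⟩
  exact pg_walk_between p j hj.1 hj.2

lemma connected_induce_pathGraph_of_ordConnected {n : ℕ} {S : Set (Fin n)}
    (hne : S.Nonempty) (hS : S.OrdConnected) :
    ((SimpleGraph.pathGraph n).induce S).Connected := by
  have key : ∀ (d : ℕ) (x y : ↥S), (y : Fin n).val = (x : Fin n).val + d →
      ((SimpleGraph.pathGraph n).induce S).Reachable x y := by
    intro d
    induction d with
    | zero =>
      intro x y h
      have : x = y := Subtype.ext (Fin.ext (by omega))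
      exact this ▸ Reachable.refl x
    | succ d ih =>
      intro x y h
      have hlt : (x : Fin n).val + 1 < n := by
        have := (y : Fin n).isLt; omega
      set z : Fin n := ⟨(x : Fin n).val + 1, hlt⟩ with hzdef
      have hz : z ∈ S := by
        apply hS.out x.2 y.2
        constructor
        · rw [Fin.le_def]; simp [hzdef]
        · rw [Fin.le_def]; show (x : Fin n).val + 1 ≤ (y : Fin n).val; omega
      have hadj : ((SimpleGraph.pathGraph n).induce S).Adj x ⟨z, hz⟩ := by
        show (SimpleGraph.pathGraph n).Adj (x : Fin n) z
        rw [SimpleGraph.pathGraph_adj]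
        left; rfl
      exact hadj.reachable.trans (ih ⟨z, hz⟩ y (by simp [hzdef]; omega))
  have : Nonempty ↥S := ⟨⟨hne.choose, hne.choose_spec⟩⟩
  refine ⟨fun x y => ?_⟩
  rcases le_total ((x : Fin n)) ((y : Fin n)) with h | h
  · exact key ((y : Fin n).val - (x : Fin n).val) x y (by rw [Fin.le_def] at h; omega)
  · exact (key ((x : Fin n).val - (y : Fin n).val) y x (by rw [Fin.le_def] at h; omega)).symm

section MainProof
variable {W : Type}



variable {W : Type} {H : SimpleGraph W}

lemma edist_start_getVert_le {a b : W} (p : H.Walk a b) (i : ℕ) :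
    H.edist a (p.getVert i) ≤ (i : ℕ∞) := by
  induction i with
  | zero => simp [SimpleGraph.Walk.getVert_zero, SimpleGraph.edist_self]
  | succ i ih =>
    by_cases h : i < p.length
    · have hadj := p.adj_getVert_succ h
      calc H.edist a (p.getVert (i + 1))
          ≤ H.edist a (p.getVert i) + H.edist (p.getVert i) (p.getVert (i + 1)) :=
            SimpleGraph.edist_triangle
        _ ≤ (i : ℕ∞) + 1 := by
            gcongr
            exact le_of_eq (SimpleGraph.edist_eq_one_iff_adj.mpr hadj)
        _ = ((i + 1 : ℕ) : ℕ∞) := by push_cast; ring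
    · push_neg at h
      rw [p.getVert_of_length_le (by omega)]
      calc H.edist a b ≤ (p.length : ℕ∞) := SimpleGraph.edist_le p
        _ ≤ ((i + 1 : ℕ) : ℕ∞) := Nat.cast_le.mpr (by omega)

lemma edist_le_of_mem_support {a b m : W} (p : H.Walk a b) (hm : m ∈ p.support) :
    H.edist a m ≤ (p.length : ℕ∞) := by
  classical
  exact le_trans (SimpleGraph.edist_le (p.takeUntil m hm))
    (Nat.cast_le.mpr (SimpleGraph.Walk.length_takeUntil_le p hm))

/-- Separator property of line-decompositions. -/
lemma bag_meets_walk {n : ℕ} {β : Fin n → Set W}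
    (hcov : ∀ ⦃u v : W⦄, H.Adj u v → ∃ x : Fin n, u ∈ β x ∧ v ∈ β x)
    (hord : ∀ w : W, Set.OrdConnected {x : Fin n | w ∈ β x}) :
    ∀ {a b : W} (p : H.Walk a b) (i j l : Fin n), i ≤ j → j ≤ l →
      a ∈ β i → b ∈ β l → ∃ m ∈ p.support, m ∈ β j := by
  intro a b p
  induction p with
  | nil =>
    intro i j l hij hjl ha hb
    exact ⟨_, by simp, (hord _).out ha hb ⟨hij, hjl⟩⟩
  | @cons a a' b hadj q ih =>
    intro i j l hij hjl ha hb
    obtain ⟨t, hat, ha't⟩ := hcov hadj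
    by_cases hjt : j ≤ t
    · exact ⟨a, by simp, (hord a).out ha hat ⟨hij, hjt⟩⟩
    · push_neg at hjt
      obtain ⟨m, hm, hmb⟩ := ih t j l hjt.le hjl ha't hb
      exact ⟨m, by simp [hm], hmb⟩

end MainProof

/-- For all `c, k ∈ ℕ`, every graph that is `c`-quasi-isometric to a graph
with pathwidth at most `k` has a `(k+1, 3c²)`-centred path-decomposition. -/
theorem centredPathDecomp_of_quasiIsometric_boundedPathwidth
    (c k : ℕ) (V W : Type) [Finite V] [Finite W] (G : SimpleGraph V) (H : SimpleGraph W)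
    (hH : ∃ (n : ℕ) (β : Fin n → Set W),
      IsTreeDecomp (SimpleGraph.pathGraph n) H β ∧
      ∀ i : Fin n, (β i).encard ≤ ((k + 1 : ℕ) : ℕ∞))
    (hQI : QuasiIsometric c G H) :
    ∃ (n : ℕ) (β : Fin n → Set V),
      IsTreeDecomp (SimpleGraph.pathGraph n) G β ∧
      ∀ i : Fin n, Centred G (k + 1) (3 * c ^ 2) (β i) := by
  classical
  obtain ⟨n, β, ⟨hcov, hconn⟩, hsize⟩ := hH
  obtain ⟨φ, hlow, hup, -⟩ := hQI
  have hbag : ∀ w : W, ∃ i, w ∈ β i := by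
    intro w
    obtain ⟨⟨i, hi⟩⟩ := (hconn w).nonempty
    exact ⟨i, hi⟩
  have hord : ∀ w : W, Set.OrdConnected {x : Fin n | w ∈ β x} := fun w =>
    ordConnected_of_connected_induce_pathGraph (hconn w)
  set β' : Fin n → Set V := fun i => {v | ∃ w ∈ β i, H.edist (φ v) w ≤ (c : ℕ∞)} with hβ'
  refine ⟨n, β', ⟨?_, ?_⟩, ?_⟩
  · -- edge cover
    intro u v huv
    have hG1 : (G.edist u v : ℝ≥0∞) = 1 := by
      rw [SimpleGraph.edist_eq_one_iff_adj.mpr huv]; simp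
    have h2 : (H.edist (φ u) (φ v) : ℝ≥0∞) ≤ (((2 * c : ℕ) : ℕ∞) : ℝ≥0∞) := by
      calc (H.edist (φ u) (φ v) : ℝ≥0∞) ≤ c * (G.edist u v : ℝ≥0∞) + c := hup u v
        _ = (((2 * c : ℕ) : ℕ∞) : ℝ≥0∞) := by rw [hG1]; push_cast; ring
    have h2' : H.edist (φ u) (φ v) ≤ ((2 * c : ℕ) : ℕ∞) := ENat.toENNReal_le.mp h2
    have hne : H.edist (φ u) (φ v) ≠ ⊤ := ne_top_of_le_ne_top (ENat.coe_ne_top _) h2'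
    obtain ⟨p, hp⟩ := SimpleGraph.exists_walk_of_edist_ne_top hne
    have hplen : p.length ≤ 2 * c := by
      have : (p.length : ℕ∞) ≤ ((2 * c : ℕ) : ℕ∞) := hp ▸ h2'
      exact_mod_cast this
    have hmu : H.edist (φ u) (p.getVert c) ≤ (c : ℕ∞) := edist_start_getVert_le p c
    have hmv : H.edist (φ v) (p.getVert c) ≤ (c : ℕ∞) := by
      by_cases hc : p.length ≤ c
      · rw [p.getVert_of_length_le hc, SimpleGraph.edist_self]; simp
      · push_neg at hc
        have hrev : p.reverse.getVert (p.length - c) = p.getVert c := by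
          rw [SimpleGraph.Walk.getVert_reverse]; congr 1; omega
        calc H.edist (φ v) (p.getVert c)
            = H.edist (φ v) (p.reverse.getVert (p.length - c)) := by rw [hrev]
          _ ≤ ((p.length - c : ℕ) : ℕ∞) := edist_start_getVert_le p.reverse _
          _ ≤ (c : ℕ∞) := Nat.cast_le.mpr (by omega)
    obtain ⟨jm, hjm⟩ := hbag (p.getVert c)
    exact ⟨jm, ⟨p.getVert c, hjm, hmu⟩, ⟨p.getVert c, hjm, hmv⟩⟩
  · -- interval condition
    intro v
    apply connected_induce_pathGraph_of_ordConnected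
    · obtain ⟨i, hi⟩ := hbag (φ v)
      exact ⟨i, φ v, hi, by simp [SimpleGraph.edist_self]⟩
    · constructor
      intro i hi l hl j hj
      obtain ⟨wi, hwi, hdi⟩ := hi
      obtain ⟨wl, hwl, hdl⟩ := hl
      obtain ⟨p1, hp1⟩ := SimpleGraph.exists_walk_of_edist_ne_top
        (ne_top_of_le_ne_top (ENat.coe_ne_top _) hdi)
      obtain ⟨p2, hp2⟩ := SimpleGraph.exists_walk_of_edist_ne_top
        (ne_top_of_le_ne_top (ENat.coe_ne_top _) hdl)
      have hp1len : (p1.length : ℕ∞) ≤ (c : ℕ∞) := hp1 ▸ hdi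
      have hp2len : (p2.length : ℕ∞) ≤ (c : ℕ∞) := hp2 ▸ hdl
      obtain ⟨m, hm, hmj⟩ := bag_meets_walk hcov hord (p1.reverse.append p2)
        i j l hj.1 hj.2 hwi hwl
      rw [SimpleGraph.Walk.mem_support_append_iff] at hm
      rcases hm with hm | hm
      · rw [SimpleGraph.Walk.support_reverse, List.mem_reverse] at hm
        exact ⟨m, hmj, le_trans (edist_le_of_mem_support p1 hm) hp1len⟩
      · exact ⟨m, hmj, le_trans (edist_le_of_mem_support p2 hm) hp2len⟩
  · -- centredness
    intro i
    by_cases hne : (β' i).Nonempty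
    · obtain ⟨v0, w0, hw0, hd0⟩ := hne
      have hfin : (β i).Finite := Set.toFinite _
      have hcard : hfin.toFinset.card ≤ k + 1 := by
        have h := hsize i
        rw [Set.Finite.encard_eq_coe_toFinset_card hfin] at h
        exact_mod_cast h
      set s : Finset W := hfin.toFinset with hs
      have hg : ∃ g : Fin (k + 1) → W, ∀ w ∈ β i, ∃ j, g j = w := by
        refine ⟨fun j => if h : (j : ℕ) < s.card then (s.equivFin.symm ⟨j, h⟩ : W) else w0, ?_⟩
        intro w hw
        have hws : w ∈ s := by rw [hs, Set.Finite.mem_toFinset]; exact hw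
        refine ⟨⟨s.equivFin ⟨w, hws⟩, lt_of_lt_of_le (s.equivFin ⟨w, hws⟩).isLt hcard⟩, ?_⟩
        simp only [(s.equivFin ⟨w, hws⟩).isLt, dif_pos]
        rw [show (⟨((s.equivFin ⟨w, hws⟩ : Fin s.card) : ℕ), (s.equivFin ⟨w, hws⟩).isLt⟩ :
          Fin s.card) = s.equivFin ⟨w, hws⟩ from Fin.eta _ _]
        rw [Equiv.symm_apply_apply]
      obtain ⟨g, hgsur⟩ := hg
      have key : ∀ v ∈ β' i, ∃ j : Fin (k + 1), H.edist (φ v) (g j) ≤ (c : ℕ∞) := by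
        rintro v ⟨w, hw, hd⟩
        obtain ⟨j, hj⟩ := hgsur w hw
        exact ⟨j, hj ▸ hd⟩
      choose! f hf using key
      refine ⟨fun j => {v | v ∈ β' i ∧ f v = j}, ?_, ?_, ?_⟩
      · ext v
        simp only [Set.mem_iUnion, Set.mem_setOf_eq]
        exact ⟨fun ⟨j, hj, _⟩ => hj, fun hv => ⟨f v, hv, rfl⟩⟩
      · intro j j' hjj'
        rw [Set.disjoint_left]
        rintro v ⟨-, rfl⟩ ⟨-, h⟩
        exact hjj' h
      · rintro j u ⟨hu, hfu⟩ v ⟨hv, hfv⟩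
        have hu' := hf u hu; rw [hfu] at hu'
        have hv' := hf v hv; rw [hfv] at hv'
        by_cases huv : u = v
        · subst huv; simp [SimpleGraph.edist_self]
        · have hH2 : (H.edist (φ u) (φ v) : ℝ≥0∞) ≤ ((2 * c : ℕ) : ℝ≥0∞) := by
            have : H.edist (φ u) (φ v) ≤ ((2 * c : ℕ) : ℕ∞) := by
              calc H.edist (φ u) (φ v)
                  ≤ H.edist (φ u) (g j) + H.edist (g j) (φ v) := SimpleGraph.edist_triangle
                _ ≤ (c : ℕ∞) + (c : ℕ∞) :=
                    add_le_add hu' (by rw [SimpleGraph.edist_comm]; exact hv')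
                _ = ((2 * c : ℕ) : ℕ∞) := by push_cast; ring
            calc (H.edist (φ u) (φ v) : ℝ≥0∞) ≤ (((2 * c : ℕ) : ℕ∞) : ℝ≥0∞) :=
                  ENat.toENNReal_le.mpr this
              _ = ((2 * c : ℕ) : ℝ≥0∞) := by push_cast; ring
          have h3 : (G.edist u v : ℝ≥0∞) / c ≤ 3 * c := by
            have h4 := (hlow u v).trans hH2
            rw [tsub_le_iff_right] at h4
            calc (G.edist u v : ℝ≥0∞) / c ≤ ((2 * c : ℕ) : ℝ≥0∞) + c := h4
              _ = 3 * c := by push_cast; ring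
          rcases Nat.eq_zero_or_pos c with hc | hc
          · subst hc
            exfalso
            have h0 : G.edist u v ≠ 0 := by
              rw [ne_eq, SimpleGraph.edist_eq_zero_iff]; exact huv
            have hz : (G.edist u v : ℝ≥0∞) ≠ 0 := fun h =>
              h0 (ENat.toENNReal_strictMono.injective (by rw [h, ENat.toENNReal_zero]))
            rw [Nat.cast_zero, ENNReal.div_zero hz] at h3
            simp at h3
          · have hc0 : (c : ℝ≥0∞) ≠ 0 := by exact_mod_cast hc.ne'
            have hct : (c : ℝ≥0∞) ≠ ⊤ := by simp
            rw [ENNReal.div_le_iff hc0 hct] at h3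
            rw [← ENat.toENNReal_le]
            calc (G.edist u v : ℝ≥0∞) ≤ 3 * c * c := h3
              _ = (((3 * c ^ 2 : ℕ) : ℕ∞) : ℝ≥0∞) := by push_cast; ring
    · refine ⟨fun _ => ∅, ?_, ?_, ?_⟩
      · simp [Set.not_nonempty_iff_eq_empty.mp hne]
      · intro _ _ _; simp
      · intro j u hu; simp at hu
end

section
/- For every c, k ∈ ℕ and every line L, if a (possibly infinite) graph G is c-quasi-isometric to a graph H that has an L-decomposition of width at most k, then G has a (k+1, 3c²)-centred L-decomposition (i.e. a line-decomposition over the same line L each of whose bags is (k+1, 3c²)-centred). -/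
open SimpleGraph
open scoped ENNReal NNReal

private lemma walk_mem_edist_le {W : Type} {H : SimpleGraph W} {a b : W} (p : H.Walk a b) :
    ∀ w ∈ p.support, H.edist a w ≤ (p.length : ℕ∞) := by
  induction p with
  | nil =>
    intro w hw
    simp only [SimpleGraph.Walk.support_nil, List.mem_singleton] at hw
    subst hw; simp
  | @cons a a' b h p ih =>
    intro w hw
    rw [SimpleGraph.Walk.support_cons] at hw
    rcases List.mem_cons.mp hw with rfl | hw
    · simp
    · calc H.edist a w ≤ H.edist a a' + H.edist a' w := SimpleGraph.edist_triangle
        _ ≤ 1 + (p.length : ℕ∞) :=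
          add_le_add (le_of_eq (SimpleGraph.edist_eq_one_iff_adj.mpr h)) (ih w hw)
        _ = ((p.cons h).length : ℕ∞) := by
          rw [SimpleGraph.Walk.length_cons]; push_cast; ring

private lemma exists_mid {W : Type} {H : SimpleGraph W} {a b : W} (p : H.Walk a b) (i : ℕ) :
    ∃ m : W, H.edist a m ≤ (i : ℕ∞) ∧ H.edist m b ≤ ((p.length - i : ℕ) : ℕ∞) := by
  induction p generalizing i with
  | @nil u => exact ⟨u, by simp, by simp⟩
  | @cons a a' b h p ih =>
    cases i with
    | zero =>
      refine ⟨a, by simp, ?_⟩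
      simpa using (p.cons h).edist_le
    | succ j =>
      obtain ⟨m, h1, h2⟩ := ih j
      refine ⟨m, ?_, ?_⟩
      · calc H.edist a m ≤ H.edist a a' + H.edist a' m := SimpleGraph.edist_triangle
          _ ≤ 1 + (j : ℕ∞) :=
            add_le_add (le_of_eq (SimpleGraph.edist_eq_one_iff_adj.mpr h)) h1
          _ = ((j + 1 : ℕ) : ℕ∞) := by push_cast; ring
      · have : (p.cons h).length - (j + 1) = p.length - j := by
          rw [SimpleGraph.Walk.length_cons]; omega
        rw [this]; exact h2

private lemma mem_bag_of_between {L W : Type} [LinearOrder L] {H : SimpleGraph W}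
    {β : L → Set W}
    (hedge : ∀ ⦃u v : W⦄, H.Adj u v → ∃ x : L, u ∈ β x ∧ v ∈ β x)
    (hconv : ∀ w : W, {x : L | w ∈ β x}.OrdConnected)
    {a b : W} (p : H.Walk a b) {y : L} (hy : b ∈ β y) :
    ∀ {x z : L}, a ∈ β x → z ∈ Set.Icc x y → ∃ w ∈ p.support, w ∈ β z := by
  induction p with
  | @nil u =>
    intro x z hx hz
    exact ⟨u, by simp, (hconv u).out hx hy hz⟩
  | @cons a a' b h p ih =>
    intro x z hx hz
    obtain ⟨x', hx1, hx2⟩ := hedge h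
    rcases le_total z x' with hzx | hxz
    · exact ⟨a, by simp, (hconv a).out hx hx1 ⟨hz.1, hzx⟩⟩
    · obtain ⟨w, hw, hwz⟩ := ih hy hx2 ⟨hxz, hz.2⟩
      exact ⟨w, by rw [SimpleGraph.Walk.support_cons]; exact List.mem_cons_of_mem _ hw, hwz⟩


/-- For every `c, k ∈ ℕ` and every line `L`, if a (possibly infinite) graph
`G` is `c`-quasi-isometric to a graph `H` that has an `L`-decomposition of width at most `k`,
then `G` has a `(k+1, 3c²)`-centred `L`-decomposition. -/
theorem centredLDecomp_of_quasiIsometric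
    (c k : ℕ) (L V W : Type) [LinearOrder L]
    (G : SimpleGraph V) (H : SimpleGraph W) (β : L → Set W)
    (hdec : IsLineDecomp H β) (hwidth : ∀ x : L, (β x).encard ≤ ((k + 1 : ℕ) : ℕ∞))
    (hQI : QuasiIsometric c G H) :
    ∃ β' : L → Set V,
      IsLineDecomp G β' ∧ ∀ x : L, Centred G (k + 1) (3 * c ^ 2) (β' x) := by
  classical
  obtain ⟨φ, hlow, hup, -⟩ := hQI
  refine ⟨fun x => {v | ∃ w ∈ β x, H.edist (φ v) w ≤ (c : ℕ∞)}, ⟨?_, ?_⟩, ?_⟩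
  · -- edge condition
    intro u v huv
    have hG1 : G.edist u v = 1 := SimpleGraph.edist_eq_one_iff_adj.mpr huv
    have hH : H.edist (φ u) (φ v) ≤ ((2 * c : ℕ) : ℕ∞) := by
      rw [← ENat.toENNReal_le]
      calc (H.edist (φ u) (φ v) : ℝ≥0∞) ≤ c * (G.edist u v : ℕ∞) + c := hup u v
        _ = (((2 * c : ℕ) : ℕ∞) : ℝ≥0∞) := by
          rw [hG1]
          simp [ENat.toENNReal_coe]
          ring
    have hne : H.edist (φ u) (φ v) ≠ ⊤ := (hH.trans_lt (ENat.coe_lt_top _)).ne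
    obtain ⟨p, hp⟩ := SimpleGraph.exists_walk_of_edist_ne_top hne
    have hplen : p.length ≤ 2 * c := by
      rw [← Nat.cast_le (α := ℕ∞), hp]
      exact hH
    obtain ⟨m, hm1, hm2⟩ := exists_mid p c
    have hm2' : H.edist m (φ v) ≤ (c : ℕ∞) := by
      refine hm2.trans (Nat.cast_le.mpr ?_)
      omega
    obtain ⟨x, hx⟩ := (hdec.2 m).1
    exact ⟨x, ⟨m, hx, hm1⟩, ⟨m, hx, by rw [SimpleGraph.edist_comm]; exact hm2'⟩⟩
  · -- vertex condition
    intro v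
    constructor
    · obtain ⟨x, hx⟩ := (hdec.2 (φ v)).1
      exact ⟨x, φ v, hx, by simp⟩
    · refine ⟨?_⟩
      intro x hx y hy z hz
      obtain ⟨w1, hw1, hd1⟩ := hx
      obtain ⟨w2, hw2, hd2⟩ := hy
      obtain ⟨p1, hp1⟩ :=
        SimpleGraph.exists_walk_of_edist_ne_top (hd1.trans_lt (ENat.coe_lt_top c)).ne
      obtain ⟨p2, hp2⟩ :=
        SimpleGraph.exists_walk_of_edist_ne_top (hd2.trans_lt (ENat.coe_lt_top c)).ne
      obtain ⟨w, hw, hwz⟩ := mem_bag_of_between hdec.1 (fun w => (hdec.2 w).2)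
        (p1.reverse.append p2) hw2 hw1 hz
      refine ⟨w, hwz, ?_⟩
      rw [SimpleGraph.Walk.mem_support_append_iff] at hw
      rcases hw with hw | hw
      · rw [SimpleGraph.Walk.support_reverse, List.mem_reverse] at hw
        exact (walk_mem_edist_le p1 w hw).trans (by rw [hp1]; exact hd1)
      · exact (walk_mem_edist_le p2 w hw).trans (by rw [hp2]; exact hd2)
  · -- centredness
    intro x
    have hfin : (β x).Finite := by
      have h := hwidth x
      rw [Set.encard_le_coe_iff] at h
      exact h.1
    haveI := hfin.fintype
    have hcard : Fintype.card (β x) ≤ k + 1 := by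
      have h := hwidth x
      rwa [Set.encard_eq_coe_toFinset_card, Set.toFinset_card, Nat.cast_le] at h
    obtain ⟨f⟩ : Nonempty ((β x) ↪ Fin (k + 1)) :=
      Function.Embedding.nonempty_of_card_le (by simpa using hcard)
    refine ⟨fun i => {v | ∃ h : ∃ w ∈ β x, H.edist (φ v) w ≤ (c : ℕ∞),
      f ⟨h.choose, h.choose_spec.1⟩ = i}, ?_, ?_, ?_⟩
    · ext v
      simp only [Set.mem_iUnion, Set.mem_setOf_eq]
      constructor
      · rintro ⟨i, h, -⟩
        exact h
      · intro h
        exact ⟨f ⟨h.choose, h.choose_spec.1⟩, h, rfl⟩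
    · intro i j hij
      rw [Set.disjoint_left]
      rintro v ⟨h1, e1⟩ ⟨h2, e2⟩
      exact hij (e1.symm.trans e2)
    · intro i u hu v hv
      obtain ⟨h1, e1⟩ := hu
      obtain ⟨h2, e2⟩ := hv
      have hch : h1.choose = h2.choose :=
        congrArg Subtype.val (f.injective (e1.trans e2.symm))
      have d1 : H.edist (φ u) h1.choose ≤ (c : ℕ∞) := h1.choose_spec.2
      have d2 : H.edist (φ v) h1.choose ≤ (c : ℕ∞) := hch ▸ h2.choose_spec.2
      have hHd : (H.edist (φ u) (φ v) : ℝ≥0∞) ≤ ((2 * c : ℕ) : ℝ≥0∞) := by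
        have h2c : H.edist (φ u) (φ v) ≤ ((2 * c : ℕ) : ℕ∞) := by
          calc H.edist (φ u) (φ v)
              ≤ H.edist (φ u) h1.choose + H.edist h1.choose (φ v) :=
                SimpleGraph.edist_triangle
            _ ≤ (c : ℕ∞) + (c : ℕ∞) :=
                add_le_add d1 (by rw [SimpleGraph.edist_comm]; exact d2)
            _ = ((2 * c : ℕ) : ℕ∞) := by push_cast; ring
        calc (H.edist (φ u) (φ v) : ℝ≥0∞) ≤ (((2 * c : ℕ) : ℕ∞) : ℝ≥0∞) :=
              ENat.toENNReal_le.mpr h2c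
          _ = ((2 * c : ℕ) : ℝ≥0∞) := ENat.toENNReal_coe _
      have key : (G.edist u v : ℝ≥0∞) ≤ ((3 * c ^ 2 : ℕ) : ℝ≥0∞) := by
        have hlo := (hlow u v).trans hHd
        rcases Nat.eq_zero_or_pos c with hc | hc
        · subst hc
          simp only [Nat.cast_zero, tsub_zero, mul_zero, Nat.cast_zero] at hlo ⊢
          have h0 : (G.edist u v : ℝ≥0∞) / 0 = 0 :=
            le_antisymm (by simpa using hlo) zero_le
          rw [ENNReal.div_eq_zero_iff] at h0
          rcases h0 with h0 | h0
          · rw [h0]; exact zero_le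
          · exact absurd h0 (by simp)
        · have hc0 : (c : ℝ≥0∞) ≠ 0 := by exact_mod_cast hc.ne'
          have hct : (c : ℝ≥0∞) ≠ ⊤ := ENNReal.natCast_ne_top c
          have hdiv : (G.edist u v : ℝ≥0∞) / c ≤ ((2 * c : ℕ) : ℝ≥0∞) + c :=
            tsub_le_iff_right.mp hlo
          have := (ENNReal.div_le_iff_le_mul (Or.inl hc0) (Or.inl hct)).mp hdiv
          calc (G.edist u v : ℝ≥0∞) ≤ (((2 * c : ℕ) : ℝ≥0∞) + c) * c := this
            _ = ((3 * c ^ 2 : ℕ) : ℝ≥0∞) := by push_cast; ring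
      rw [← ENat.toENNReal_le, ENat.toENNReal_coe]
      exact key
end
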